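/- arXiv:2512.19579 — 2 statements merged into one kernel-verified Lean document; each statement's English description precedes it below -/
import Mathlib

section
/- Let V and Q be real Hilbert spaces, a(·,·) a symmetric positive definite bilinear form on V with associated norm ‖·‖_A, and let div: V → Q be a bounded linear map. Suppose the inf-sup condition holds: there exists η > 0 and c > 0 such that for all q ∈ Q, sup_{w ∈ V, w ≠ 0} (div w, q)/‖w‖_A ≥ η c ‖q‖. If u ∈ V and p ∈ Q satisfy a(u, v) − α (p, div v) = 0 for all v ∈ V (with α > 0), then ‖u‖_A² ≥ η² α² c² ‖p‖². -/
lemma cs_aux {V : Type*} [NormedAddCommGroup V] [InnerProductSpace ℝ V]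
    (a : V →ₗ[ℝ] V →ₗ[ℝ] ℝ) (hsymm : ∀ x y : V, a x y = a y x)
    (hpos : ∀ v : V, 0 ≤ a v v) (u w : V) :
    (a u w) ^ 2 ≤ a u u * a w w := by
  have h : ∀ t : ℝ, 0 ≤ a w w * (t * t) + (2 * a u w) * t + a u u := by
    intro t
    have := hpos (u + t • w)
    simp only [map_add, map_smul, LinearMap.add_apply, LinearMap.smul_apply,
      smul_eq_mul] at this
    rw [hsymm w u] at this
    nlinarith [this]
  have := discrim_le_zero h
  rw [discrim] at this
  nlinarith [this]

/-- abstract inf-sup implies energy lower bound (Lemma 2.1). -/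
theorem stmt_0 {V Q : Type*} [NormedAddCommGroup V] [InnerProductSpace ℝ V] [CompleteSpace V]
    [NormedAddCommGroup Q] [InnerProductSpace ℝ Q] [CompleteSpace Q]
    (a : V →ₗ[ℝ] V →ₗ[ℝ] ℝ)
    (hsymm : ∀ x y : V, a x y = a y x)
    (hposdef : ∀ v : V, v ≠ 0 → 0 < a v v)
    (hpos : ∀ v : V, 0 ≤ a v v)
    (dv : V →L[ℝ] Q)
    (η c α : ℝ) (hη : 0 < η) (hc : 0 < c) (hα : 0 < α)
    (hinfsup : ∀ q : Q, ∀ ε > (0:ℝ), ∃ w : V, w ≠ 0 ∧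
      η * c * ‖q‖ - ε ≤ (inner ℝ (dv w) q : ℝ) / Real.sqrt (a w w))
    (u : V) (p : Q)
    (heq : ∀ v : V, a u v - α * (inner ℝ p (dv v) : ℝ) = 0) :
    a u u ≥ η ^ 2 * α ^ 2 * c ^ 2 * ‖p‖ ^ 2 := by
  -- key: η c ‖p‖ ≤ √(a u u) / α
  have key : η * c * ‖p‖ ≤ Real.sqrt (a u u) / α := by
    by_contra hlt
    push_neg at hlt
    set ε := (η * c * ‖p‖ - Real.sqrt (a u u) / α) / 2 with hε
    have hεpos : 0 < ε := by rw [hε]; linarith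
    obtain ⟨w, hw0, hw⟩ := hinfsup p ε hεpos
    have haw : 0 < a w w := hposdef w hw0
    have hsq : Real.sqrt (a w w) > 0 := Real.sqrt_pos.mpr haw
    have hip : (inner ℝ (dv w) p : ℝ) = a u w / α := by
      have := heq w
      rw [real_inner_comm]
      field_simp
      linarith [this]
    have hcs : a u w ≤ Real.sqrt (a u u) * Real.sqrt (a w w) := by
      have h1 := cs_aux a hsymm hpos u w
      calc a u w ≤ |a u w| := le_abs_self _
        _ = Real.sqrt ((a u w) ^ 2) := (Real.sqrt_sq_eq_abs _).symm
        _ ≤ Real.sqrt (a u u * a w w) := Real.sqrt_le_sqrt h1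
        _ = Real.sqrt (a u u) * Real.sqrt (a w w) := Real.sqrt_mul (hpos u) _
    have hbound : (inner ℝ (dv w) p : ℝ) / Real.sqrt (a w w) ≤ Real.sqrt (a u u) / α := by
      rw [hip, div_div, div_le_div_iff₀ (by positivity) hα]
      nlinarith
    -- hw: η c ‖p‖ - ε ≤ ... ≤ √(a u u)/α, but ε = (ηc‖p‖ - √/α)/2 gives contradiction
    have : η * c * ‖p‖ - ε ≤ Real.sqrt (a u u) / α := le_trans hw hbound
    rw [hε] at this
    linarith
  have h1 : α * (η * c * ‖p‖) ≤ Real.sqrt (a u u) := by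
    rw [le_div_iff₀ hα] at key
    linarith [key]
  have h2 : (α * (η * c * ‖p‖)) ^ 2 ≤ Real.sqrt (a u u) ^ 2 := by
    apply sq_le_sq' _ h1
    nlinarith [mul_nonneg (mul_nonneg (le_of_lt hα) (mul_nonneg (le_of_lt hη) (le_of_lt hc)))
      (norm_nonneg p), Real.sqrt_nonneg (a u u)]
  rw [Real.sq_sqrt (hpos u)] at h2
  nlinarith [h2]
end

section
/- Let V and Q be real Hilbert spaces, a a symmetric coercive bounded bilinear form on V with coercivity a(v,v) ≥ (λ+2μ/d)‖div v‖², div: V → Q bounded linear, α > 0, L = ω α²/(λ+2μ/d) with ω ≥ 1, β > 0, b a symmetric positive semidefinite bilinear form on Q with seminorm ‖·‖_B. Suppose δu ∈ V and δp ∈ Q satisfy: (i) a(δu, v) − α(δp, div v) = 0 for all v ∈ V; (ii) (1/β)(δp, q) + α(div δu, q) + τ b(p¹, q) = (τ/β)(R_p, q) + τα(div R_u, q) for all q ∈ Q, where p¹ = p⁰ + δp. If additionally the inf-sup bound ‖δu‖_A² ≥ η²(α²/(λ+2μ/d))‖δp‖² holds with η > 0, then (η²/(2ω))·(L/2)‖δp‖²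 + (τ/2)‖p¹‖_B² ≤ (τ/2)‖p⁰‖_B² + (τ²/(4β))‖R_p‖² + (τ²/(2η²))‖R_u‖_A². -/
set_option maxHeartbeats 1000000 in
/-- abstract first-time-step error estimate (Lemma 2.2). -/
theorem stmt_16 {V Q : Type*} [NormedAddCommGroup V] [InnerProductSpace ℝ V] [CompleteSpace V]
    [NormedAddCommGroup Q] [InnerProductSpace ℝ Q] [CompleteSpace Q]
    (a : V →ₗ[ℝ] V →ₗ[ℝ] ℝ)
    (hasymm : ∀ x y : V, a x y = a y x)
    (hapos : ∀ v : V, 0 ≤ a v v)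
    (dv : V →L[ℝ] Q)
    (lam mu α ω L β τ η : ℝ) (d : ℕ)
    (hlam : 0 ≤ lam) (hmu : 0 < mu) (hd : 1 ≤ d) (hα : 0 < α) (hω : 1 ≤ ω)
    (hL : L = ω * α ^ 2 / (lam + 2 * mu / (d : ℝ)))
    (hβ : 0 < β) (hτ : 0 < τ) (hη : 0 < η)
    (hcoer : ∀ v : V, (lam + 2 * mu / (d : ℝ)) * ‖dv v‖ ^ 2 ≤ a v v)
    (b : Q →ₗ[ℝ] Q →ₗ[ℝ] ℝ)
    (hbsymm : ∀ x y : Q, b x y = b y x)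
    (hbpos : ∀ q : Q, 0 ≤ b q q)
    (δu Ru : V) (δp p0 Rp : Q)
    (h1 : ∀ v : V, a δu v - α * (inner ℝ δp (dv v) : ℝ) = 0)
    (h2 : ∀ q : Q, (1 / β) * (inner ℝ δp q : ℝ) + α * (inner ℝ (dv δu) q : ℝ) +
        τ * b (p0 + δp) q =
        (τ / β) * (inner ℝ Rp q : ℝ) + τ * α * (inner ℝ (dv Ru) q : ℝ))
    (hinfsup : a δu δu ≥ η ^ 2 * (α ^ 2 / (lam + 2 * mu / (d : ℝ))) * ‖δp‖ ^ 2) :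
    (η ^ 2 / (2 * ω)) * (L / 2) * ‖δp‖ ^ 2 + (τ / 2) * b (p0 + δp) (p0 + δp) ≤
      (τ / 2) * b p0 p0 + (τ ^ 2 / (4 * β)) * ‖Rp‖ ^ 2 +
        (τ ^ 2 / (2 * η ^ 2)) * a Ru Ru := by
  have hd' : (0:ℝ) < (d:ℝ) := by exact_mod_cast Nat.lt_of_lt_of_le Nat.zero_lt_one hd
  set M := lam + 2 * mu / (d : ℝ) with hMdef
  have hM : 0 < M := by
    have : 0 < 2 * mu / (d:ℝ) := by positivity
    simp only [hMdef]; linarith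
  have hω0 : (0:ℝ) < ω := lt_of_lt_of_le one_pos hω
  -- coefficient identity
  have hcoef : (η ^ 2 / (2 * ω)) * (L / 2) = η ^ 2 * α ^ 2 / (4 * M) := by
    rw [hL]; field_simp; ring
  rw [hcoef]
  -- h1 at δu
  have hA1 : a δu δu = α * (inner ℝ δp (dv δu) : ℝ) := by have := h1 δu; linarith
  have heq := h2 δp
  rw [real_inner_self_eq_norm_sq δp] at heq
  have hsy : α * (inner ℝ (dv δu) δp : ℝ) = a δu δu := by
    rw [real_inner_comm, ← hA1]
  -- b polarization bound
  have hb : (τ/2) * b (p0+δp) (p0+δp) - (τ/2) * b p0 p0 ≤ τ * b (p0+δp) δp := by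
    have h0 := hbpos δp
    have e1 : b (p0+δp) δp = b p0 δp + b δp δp := by simp [map_add]
    have e2 : b (p0+δp) (p0+δp) = b p0 p0 + b p0 δp + (b δp p0 + b δp δp) := by
      simp only [map_add, LinearMap.add_apply]; ring
    have e3 : b δp p0 = b p0 δp := hbsymm _ _
    rw [e1, e2, e3]
    nlinarith [hτ.le]
  -- Rp bound
  have hRp : (τ/β) * (inner ℝ Rp δp : ℝ) ≤ (1/β) * ‖δp‖^2 + (τ^2/(4*β)) * ‖Rp‖^2 := by
    have h1' : (inner ℝ Rp δp : ℝ) ≤ ‖Rp‖ * ‖δp‖ := real_inner_le_norm _ _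
    have h2' : τ * (inner ℝ Rp δp : ℝ) ≤ ‖δp‖^2 + (τ^2/4)*‖Rp‖^2 := by
      nlinarith [sq_nonneg (‖δp‖ - (τ/2)*‖Rp‖), mul_le_mul_of_nonneg_left h1' hτ.le]
    have hβ' : (0:ℝ) < 1/β := by positivity
    calc (τ/β) * (inner ℝ Rp δp : ℝ) = (1/β) * (τ * (inner ℝ Rp δp : ℝ)) := by ring
    _ ≤ (1/β) * (‖δp‖^2 + (τ^2/4)*‖Rp‖^2) := mul_le_mul_of_nonneg_left h2' hβ'.le
    _ = (1/β) * ‖δp‖^2 + (τ^2/(4*β)) * ‖Rp‖^2 := by field_simp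
  -- Ru bound
  have hRu : τ*α*(inner ℝ (dv Ru) δp : ℝ) ≤
      η^2*α^2/(2*M) * ‖δp‖^2 + (τ^2/(2*η^2)) * a Ru Ru := by
    have hc := hcoer Ru
    have h1' : (inner ℝ (dv Ru) δp : ℝ) ≤ ‖dv Ru‖ * ‖δp‖ := real_inner_le_norm _ _
    have hτα : (0:ℝ) < τ*α := mul_pos hτ hα
    have s1 : τ*α*(inner ℝ (dv Ru) δp : ℝ) ≤ τ*α*(‖dv Ru‖*‖δp‖) :=
      mul_le_mul_of_nonneg_left h1' hτα.le
    have s2 : τ*α*(‖dv Ru‖*‖δp‖) ≤ η^2*α^2/(2*M) * ‖δp‖^2 + (τ^2*M/(2*η^2)) * ‖dv Ru‖^2 := by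
      have key := sq_nonneg (η^2*α*‖δp‖ - τ*M*‖dv Ru‖)
      have hMne : (2*M) ≠ 0 := by positivity
      have hηne : (2*η^2) ≠ 0 := by positivity
      rw [div_mul_eq_mul_div, div_mul_eq_mul_div, div_add_div _ _ hMne hηne,
        le_div_iff₀ (by positivity)]
      linarith [key]
    have s3 : (τ^2*M/(2*η^2)) * ‖dv Ru‖^2 ≤ (τ^2/(2*η^2)) * a Ru Ru := by
      have hpos : (0:ℝ) ≤ τ^2/(2*η^2) := by positivity
      have := mul_le_mul_of_nonneg_left hc hpos
      calc (τ^2*M/(2*η^2)) * ‖dv Ru‖^2 = (τ^2/(2*η^2)) * (M * ‖dv Ru‖^2) := by ring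
      _ ≤ (τ^2/(2*η^2)) * a Ru Ru := this
    linarith
  -- inf-sup rewritten
  have hinf' : η^2*α^2/(2*M) * ‖δp‖^2 + η^2*α^2/(2*M) * ‖δp‖^2 ≤ a δu δu := by
    have he : η ^ 2 * (α ^ 2 / M) * ‖δp‖ ^ 2
        = η^2*α^2/(2*M) * ‖δp‖^2 + η^2*α^2/(2*M) * ‖δp‖^2 := by
      field_simp; ring
    rw [← he]; exact hinfsup
  have hPle : η^2*α^2/(4*M) * ‖δp‖^2 ≤ η^2*α^2/(2*M) * ‖δp‖^2 := by
    have hn : (0:ℝ) ≤ ‖δp‖^2 := by positivity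
    have : η^2*α^2/(4*M) ≤ η^2*α^2/(2*M) := by
      apply div_le_div_of_nonneg_left (by positivity) (by linarith) (by linarith)
    exact mul_le_mul_of_nonneg_right this hn
  linarith
end
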